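/- Let I = [n+1, n+m] be a finite interval in ℤ and let K = [n'+1, n'+m'] be a subinterval of I. For an e-BZ datum M on I, define M_K by (M_K)_m := M_{[n+1,n'] ∪ m} for each Maya diagram m ⊆ K̃ = [n'+1, n'+m'+1] (with [n+1,n'] empty if n' = n). Then M_K is an e-BZ datum associated to K. -/

import Mathlib

/-- The extended interval Ĩ = [n+1, n+m+1]. -/
noncomputable def Itilde (n m : ℤ) : Finset ℤ := Finset.Icc (n + 1) (n + m + 1)

/-- The pairing ⟨h_i, k⟩ ∈ {−1,0,1} determined by membership of i, i+1 in k. -/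
def pairH (i : ℤ) (k : Finset ℤ) : ℤ :=
  if i ∈ k ∧ i + 1 ∉ k then 1 else if i ∉ k ∧ i + 1 ∈ k then -1 else 0

/-- Edge inequalities (BZ-1). -/
def BZ1 (n m : ℤ) (M : Finset ℤ → ℤ) : Prop :=
  ∀ (i j : ℤ) (k : Finset ℤ), i ∈ Itilde n m → j ∈ Itilde n m → i ≠ j →
    k ⊆ Itilde n m → i ∉ k → j ∉ k →
    M (insert i k) + M (insert j k) ≤ M (insert i (insert j k)) + M k

/-- Tropical Plücker relations (BZ-2). -/
def BZ2 (n m : ℤ) (M : Finset ℤ → ℤ) : Prop :=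
  ∀ (i j l : ℤ) (k : Finset ℤ), i ∈ Itilde n m → j ∈ Itilde n m → l ∈ Itilde n m →
    i < j → j < l → k ⊆ Itilde n m → i ∉ k → j ∉ k → l ∉ k →
    M (insert i (insert l k)) + M (insert j k) =
      min (M (insert i (insert j k)) + M (insert l k))
        (M (insert j (insert l k)) + M (insert i k))

/-- The e-normalization condition (BZ-0). -/
def eNorm (n m : ℤ) (M : Finset ℤ → ℤ) : Prop :=
  ∀ i ∈ Finset.Icc (n + 1) (n + m), M (Finset.Icc (n + 1) i) = 0

/-- e-BZ datum on the interval I = [n+1, n+m], with the conventions M_∅ = M_Ĩ = 0. -/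
def eBZ (n m : ℤ) (M : Finset ℤ → ℤ) : Prop :=
  M ∅ = 0 ∧ M (Itilde n m) = 0 ∧ BZ1 n m M ∧ BZ2 n m M ∧ eNorm n m M

/-- wt^∨(M) paired with a Maya diagram k. -/
noncomputable def wtv (n m : ℤ) (M : Finset ℤ → ℤ) (k : Finset ℤ) : ℤ :=
  ∑ i ∈ Finset.Icc (n + 1) (n + m), M (Finset.Icc (i + 1) (n + m + 1)) * pairH i k

/-- The sharp operation M ↦ M^♯. -/
noncomputable def sharp (n m : ℤ) (M : Finset ℤ → ℤ) : Finset ℤ → ℤ :=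
  fun k => M (Itilde n m \ k) - wtv n m M k

/-! The edge inequalities and Plücker relations survive freezing a set `P` of indices outside
`K̃` into every argument; here `P = [n+1, n']`. The normalization is inherited because every
initial interval of `K̃`, enlarged by `P`, is an initial interval of `Ĩ`, on which `M` vanishes. -/

theorem Icc_union_Icc_add_one {a b c : ℤ} (hab : a ≤ b + 1) (hbc : b ≤ c) :
    Finset.Icc a b ∪ Finset.Icc (b + 1) c = Finset.Icc a c := by
  ext x
  simp only [Finset.mem_union, Finset.mem_Icc]
  omega

section Restriction

variable {n m n' m' : ℤ} {P : Finset ℤ} {M : Finset ℤ → ℤ}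

theorem BZ1.union_left (hM : BZ1 n m M) (hP : P ∪ Itilde n' m' ⊆ Itilde n m)
    (hdisj : Disjoint P (Itilde n' m')) : BZ1 n' m' (fun k => M (P ∪ k)) := by
  intro i j k hi hj hij hk hik hjk
  simpa only [Finset.union_insert] using
    hM i j (P ∪ k) (hP (by simp [hi])) (hP (by simp [hj])) hij
      (Finset.union_subset_union_right hk |>.trans hP)
      (by simp [hik, Finset.disjoint_right.mp hdisj hi])
      (by simp [hjk, Finset.disjoint_right.mp hdisj hj])

theorem BZ2.union_left (hM : BZ2 n m M) (hP : P ∪ Itilde n' m' ⊆ Itilde n m)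
    (hdisj : Disjoint P (Itilde n' m')) : BZ2 n' m' (fun k => M (P ∪ k)) := by
  intro i j l k hi hj hl hij hjl hk hik hjk hlk
  simpa only [Finset.union_insert] using
    hM i j l (P ∪ k) (hP (by simp [hi])) (hP (by simp [hj])) (hP (by simp [hl])) hij hjl
      (Finset.union_subset_union_right hk |>.trans hP)
      (by simp [hik, Finset.disjoint_right.mp hdisj hi])
      (by simp [hjk, Finset.disjoint_right.mp hdisj hj])
      (by simp [hlk, Finset.disjoint_right.mp hdisj hl])

theorem eBZ.apply_Icc_eq_zero (hM : eBZ n m M) {i : ℤ} (hi₁ : n ≤ i) (hi₂ : i ≤ n + m + 1) :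
    M (Finset.Icc (n + 1) i) = 0 := by
  obtain ⟨h0, hI, -, -, hnorm⟩ := hM
  rcases hi₁.eq_or_lt with rfl | hlt
  · simpa using h0
  rcases hi₂.eq_or_lt with rfl | hlt'
  · exact hI
  exact hnorm i (Finset.mem_Icc.mpr ⟨by omega, by omega⟩)

end Restriction

theorem stmt10_general (n m n' m' : ℤ) (hm' : 0 < m')
    (h1 : n ≤ n') (h2 : n' + m' ≤ n + m) (M : Finset ℤ → ℤ) (hM : eBZ n m M) :
    eBZ n' m' (fun k => M (Finset.Icc (n + 1) n' ∪ k)) := by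
  have hunion : Finset.Icc (n + 1) n' ∪ Itilde n' m' = Finset.Icc (n + 1) (n' + m' + 1) :=
    Icc_union_Icc_add_one (by omega) (by omega)
  have hP : Finset.Icc (n + 1) n' ∪ Itilde n' m' ⊆ Itilde n m := by
    rw [hunion, Itilde]
    exact Finset.Icc_subset_Icc le_rfl (by omega)
  have hdisj : Disjoint (Finset.Icc (n + 1) n') (Itilde n' m') := by
    rw [Itilde, Finset.disjoint_left]
    simp only [Finset.mem_Icc]
    omega
  refine ⟨?_, ?_, hM.2.2.1.union_left hP hdisj, hM.2.2.2.1.union_left hP hdisj, ?_⟩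
  · simpa using hM.apply_Icc_eq_zero h1 (by omega)
  · simpa [hunion] using hM.apply_Icc_eq_zero (i := n' + m' + 1) (by omega) (by omega)
  · intro i hi
    rw [Finset.mem_Icc] at hi
    simpa [Icc_union_Icc_add_one (show n + 1 ≤ n' + 1 by omega) (show n' ≤ i by omega)]
      using hM.apply_Icc_eq_zero (i := i) (by omega) (by omega)

/-- The restriction of an e-BZ datum on I = [n+1,n+m] to a subinterval K = [n'+1,n'+m']
is an e-BZ datum on K. -/
theorem stmt10 (n m n' m' : ℤ) (hm : 0 < m) (hm' : 0 < m')
    (h1 : n ≤ n') (h2 : n' + m' ≤ n + m) (M : Finset ℤ → ℤ) (hM : eBZ n m M) :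
    eBZ n' m' (fun k => M (Finset.Icc (n + 1) n' ∪ k)) :=
  stmt10_general n m n' m' hm' h1 h2 M hM
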